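/- For real numbers 0 < x₁ ≤ x₂ ≤ 1 and 0 ≤ y₂ ≤ y₁ ≤ 1, we have −(y₁·log x₁ + y₂·log x₂) ≥ −(y₁ + y₂)·log((x₁ + x₂)/2). -/

import Mathlib

/-!
Writing `m = (x₁ + x₂) / 2`, split `y₁ log x₁ + y₂ log x₂` as
`y₂ (log x₁ + log x₂) + (y₁ - y₂) log x₁`. Concavity of `log` bounds the first bracket by
`2 log m`, and monotonicity bounds `log x₁` by `log m`; both weights are nonnegative.
-/

open Set

lemma ConcaveOn.add_le_two_mul_map_midpoint {s : Set ℝ} {f : ℝ → ℝ} (hf : ConcaveOn ℝ s f)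
    {a b : ℝ} (ha : a ∈ s) (hb : b ∈ s) : f a + f b ≤ 2 * f ((a + b) / 2) := by
  have h := hf.2 ha hb (by norm_num : (0 : ℝ) ≤ 1 / 2) (by norm_num : (0 : ℝ) ≤ 1 / 2)
    (by norm_num)
  simp only [smul_eq_mul] at h
  rw [show 1 / 2 * a + 1 / 2 * b = (a + b) / 2 by ring] at h
  linarith

lemma ConcaveOn.mul_add_mul_le_mul_map_midpoint {s : Set ℝ} {f : ℝ → ℝ}
    (hf : ConcaveOn ℝ s f) (hmono : MonotoneOn f s) {a b u v : ℝ} (ha : a ∈ s) (hb : b ∈ s)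
    (hab : a ≤ b) (hv : 0 ≤ v) (hvu : v ≤ u) :
    u * f a + v * f b ≤ (u + v) * f ((a + b) / 2) := by
  have hmid : (a + b) / 2 ∈ s := by
    have h := hf.1 ha hb (by norm_num : (0 : ℝ) ≤ 1 / 2) (by norm_num : (0 : ℝ) ≤ 1 / 2)
      (by norm_num)
    simp only [smul_eq_mul] at h
    rwa [show 1 / 2 * a + 1 / 2 * b = (a + b) / 2 by ring] at h
  have hsum := hf.add_le_two_mul_map_midpoint ha hb
  have hleft : f a ≤ f ((a + b) / 2) := hmono ha hmid (by linarith)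
  calc u * f a + v * f b = v * (f a + f b) + (u - v) * f a := by ring
    _ ≤ v * (2 * f ((a + b) / 2)) + (u - v) * f ((a + b) / 2) := by gcongr
    _ = (u + v) * f ((a + b) / 2) := by ring

theorem stmt_0_general (x₁ x₂ y₁ y₂ : ℝ) (hx1 : 0 < x₁) (hx12 : x₁ ≤ x₂)
    (hy2 : 0 ≤ y₂) (hy21 : y₂ ≤ y₁) :
    -(y₁ * Real.log x₁ + y₂ * Real.log x₂) ≥ -((y₁ + y₂) * Real.log ((x₁ + x₂) / 2)) := by
  have h := strictConcaveOn_log_Ioi.concaveOn.mul_add_mul_le_mul_map_midpoint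
    Real.strictMonoOn_log.monotoneOn (mem_Ioi.2 hx1) (mem_Ioi.2 (hx1.trans_le hx12))
    hx12 hy2 hy21
  linarith

theorem stmt_0 (x₁ x₂ y₁ y₂ : ℝ) (hx1 : 0 < x₁) (hx12 : x₁ ≤ x₂) (hx2 : x₂ ≤ 1)
    (hy2 : 0 ≤ y₂) (hy21 : y₂ ≤ y₁) (hy1 : y₁ ≤ 1) :
    -(y₁ * Real.log x₁ + y₂ * Real.log x₂) ≥ -((y₁ + y₂) * Real.log ((x₁ + x₂) / 2)) :=
  stmt_0_general x₁ x₂ y₁ y₂ hx1 hx12 hy2 hy21
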